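/- arXiv:2110.08984 — 2 statements merged into one kernel-verified Lean document; each statement's English description precedes it below -/
import Mathlib

section
/- Let A be a finite set, π a probability distribution on A, Q : A → ℝ with 0 ≤ Q(a) ≤ H for all a, and α > 0. Define π⁺(a) ∝ π(a)·exp(α Q(a)). Then for any probability distribution p on A: α · ⟨Q, p − π⟩ ≤ KL(p ‖ π) − KL(p ‖ π⁺) + α²H²/2. -/
/-!
The exponential-weights update satisfies `KL(p‖π) - KL(p‖π⁺) = α⟨Q, p⟩ - log Z` with
`Z = Σ π(a) exp(α Q(a))`, so the claim reduces to the cumulant bound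
`log Z ≤ α⟨Q, π⟩ + α²H²/2`. This is Hoeffding's lemma for `Q` under `π`, which even gives `α²H²/8`.
-/

open Finset MeasureTheory ProbabilityTheory
open Real (exp log exp_pos exp_ne_zero exp_add log_div log_exp log_le_iff_le_exp norm_eq_abs)

lemma log_sum_mul_exp_le_of_mem_Icc {ι : Type*} [Fintype ι] {w X : ι → ℝ} {a b : ℝ}
    (hw : ∀ i, 0 ≤ w i) (hw1 : ∑ i, w i = 1) (hX : ∀ i, X i ∈ Set.Icc a b) (t : ℝ) :
    log (∑ i, w i * exp (t * X i)) ≤ t * ∑ i, w i * X i + (b - a) ^ 2 * t ^ 2 / 8 := by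
  let _ : MeasurableSpace ι := ⊤
  let P : PMF ι := PMF.ofFintype (fun i ↦ ENNReal.ofReal (w i)) <| by
    rw [← ENNReal.ofReal_sum_of_nonneg fun i _ ↦ hw i, hw1, ENNReal.ofReal_one]
  have hP (f : ι → ℝ) : ∫ i, f i ∂P.toMeasure = ∑ i, w i * f i := by
    simp [P, PMF.integral_eq_sum, hw]
  have hoeffding := (hasSubgaussianMGF_of_mem_Icc (μ := P.toMeasure)
    (measurable_of_countable X).aemeasurable (ae_of_all _ hX)).mgf_le t
  simp only [sub_eq_add_neg, mgf_add_const, hP] at hoeffding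
  have hmgf : mgf X P.toMeasure t = ∑ i, w i * exp (t * X i) := hP _
  rw [← hmgf, log_le_iff_le_exp (mgf_pos .of_finite)]
  calc mgf X P.toMeasure t
      = mgf X P.toMeasure t * exp (t * -∑ i, w i * X i) * exp (t * ∑ i, w i * X i) := by
        rw [mul_assoc, ← exp_add]; simp
    _ ≤ exp (((‖b + -a‖₊ / 2) ^ 2 : NNReal) * t ^ 2 / 2) * exp (t * ∑ i, w i * X i) := by
        gcongr
    _ = exp (t * ∑ i, w i * X i + (b - a) ^ 2 * t ^ 2 / 8) := by
        rw [← exp_add]; push_cast; rw [norm_eq_abs, div_pow, sq_abs]; ring_nf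

lemma mul_log_div_sub_mul_log_div {p r q : ℝ} (hr : r ≠ 0) (hq : q ≠ 0) :
    p * log (p / r) - p * log (p / q) = p * log (q / r) := by
  rcases eq_or_ne p 0 with rfl | hp
  · simp
  · rw [log_div hp hr, log_div hp hq, log_div hq hr]
    ring

lemma sum_mul_log_div_sub_sum_mul_log_div_tilt {A : Type*} [Fintype A] {π f p : A → ℝ}
    (hπ : ∀ a, π a ≠ 0) (hZ : ∑ a, π a * exp (f a) ≠ 0) (hp : ∑ a, p a = 1) :
    (∑ a, p a * log (p a / π a))
        - ∑ a, p a * log (p a / (π a * exp (f a) / ∑ a', π a' * exp (f a'))) =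
      ∑ a, p a * f a - log (∑ a, π a * exp (f a)) := by
  have htilt (a : A) : p a * log (p a / π a)
      - p a * log (p a / (π a * exp (f a) / ∑ a', π a' * exp (f a'))) =
      p a * f a - p a * log (∑ a', π a' * exp (f a')) := by
    rw [mul_log_div_sub_mul_log_div (hπ a) (div_ne_zero (mul_ne_zero (hπ a) (exp_ne_zero _)) hZ),
      div_right_comm, mul_div_cancel_left₀ _ (hπ a), log_div (exp_ne_zero _) hZ, log_exp, mul_sub]
  rw [← sum_sub_distrib, sum_congr rfl fun a _ ↦ htilt a, sum_sub_distrib, ← sum_mul, hp, one_mul]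

theorem stmt_3_general {A : Type*} [Fintype A] [Nonempty A] (π Q : A → ℝ) (H α : ℝ)
    (hπpos : ∀ a, 0 < π a) (hπsum : ∑ a, π a = 1)
    (hQ : ∀ a, 0 ≤ Q a ∧ Q a ≤ H)
    (πp : A → ℝ)
    (hπp : ∀ a, πp a = π a * Real.exp (α * Q a) / ∑ a', π a' * Real.exp (α * Q a'))
    (p : A → ℝ) (hpsum : ∑ a, p a = 1) :
    α * ∑ a, Q a * (p a - π a) ≤
      (∑ a, p a * Real.log (p a / π a)) - (∑ a, p a * Real.log (p a / πp a))
        + α ^ 2 * H ^ 2 / 2 := by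
  have hZ : 0 < ∑ a, π a * exp (α * Q a) :=
    sum_pos (fun a _ ↦ mul_pos (hπpos a) (exp_pos _)) univ_nonempty
  rw [funext hπp, sum_mul_log_div_sub_sum_mul_log_div_tilt (fun a ↦ (hπpos a).ne') hZ.ne' hpsum]
  have hoeffding := log_sum_mul_exp_le_of_mem_Icc (fun a ↦ (hπpos a).le) hπsum hQ α
  have hinner : α * ∑ a, Q a * (p a - π a) = ∑ a, p a * (α * Q a) - α * ∑ a, π a * Q a := by
    simp only [mul_sum, ← sum_sub_distrib]
    exact sum_congr rfl fun a _ ↦ by ring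
  nlinarith [sq_nonneg (α * H)]

/-- One-step mirror descent lemma: for the exponentiated-gradient update
π⁺(a) ∝ π(a)·exp(α Q(a)), for any distribution p on A,
α⟨Q, p − π⟩ ≤ KL(p‖π) − KL(p‖π⁺) + α²H²/2. -/
theorem stmt_3 {A : Type*} [Fintype A] [Nonempty A] (π Q : A → ℝ) (H α : ℝ)
    (hπpos : ∀ a, 0 < π a) (hπsum : ∑ a, π a = 1)
    (hQ : ∀ a, 0 ≤ Q a ∧ Q a ≤ H) (hα : 0 < α)
    (πp : A → ℝ)
    (hπp : ∀ a, πp a = π a * Real.exp (α * Q a) / ∑ a', π a' * Real.exp (α * Q a'))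
    (p : A → ℝ) (hp : ∀ a, 0 ≤ p a) (hpsum : ∑ a, p a = 1) :
    α * ∑ a, Q a * (p a - π a) ≤
      (∑ a, p a * Real.log (p a / π a)) - (∑ a, p a * Real.log (p a / πp a))
        + α ^ 2 * H ^ 2 / 2 :=
  stmt_3_general π Q H α hπpos hπsum hQ πp hπp p hpsum
end

section
/- Let {φₜ}ₜ≥1 be a sequence in ℝᵈ with ‖φₜ‖₂ ≤ 1, let Λ₀ be a positive-definite d×d matrix with smallest eigenvalue at least 1, and define Λₜ = Λ₀ + Σ_{j=1}^{t−1} φⱼφⱼᵀ. Then for all t: log(det(Λ_{t+1})/det(Λ₁)) ≤ Σ_{j=1}^{t} φⱼᵀ Λⱼ⁻¹ φⱼ ≤ 2 log(det(Λ_{t+1})/det(Λ₁)). -/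
/-!
Each rank-one update multiplies the determinant by `1 + xⱼ`, where `xⱼ = φⱼᵀ Λⱼ⁻¹ φⱼ`
(matrix determinant lemma), so `log (det Λₜ₊₁ / det Λ₁) = ∑ⱼ log (1 + xⱼ)`. Since `Λⱼ ⪰ 1`,
`0 ≤ xⱼ ≤ ‖φⱼ‖² ≤ 1`, and on `[0, 1]` one has `log (1 + x) ≤ x ≤ 2 log (1 + x)`.
-/

open Matrix

namespace Matrix

theorem posSemidef_vecMulVec_self {n : Type*} [Fintype n] (v : n → ℝ) :
    (vecMulVec v v).PosSemidef := by
  simpa using posSemidef_vecMulVec_self_star v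

theorem posDef_of_posSemidef_sub_one {n : Type*} [DecidableEq n] {A : Matrix n n ℝ}
    (hA : (A - 1).PosSemidef) : A.PosDef := by
  simpa using PosDef.one.add_posSemidef hA

variable {n : Type*} [Fintype n] [DecidableEq n]

theorem det_add_vecMulVec {R : Type*} [CommRing R] {A : Matrix n n R} (hA : IsUnit A.det)
    (u v : n → R) : (A + vecMulVec u v).det = A.det * (1 + v ⬝ᵥ A⁻¹ *ᵥ u) := by
  rw [vecMulVec_eq Unit, det_add_replicateCol_mul_replicateRow hA, Matrix.mul_assoc,
    ← replicateCol_mulVec, det_unique (1 + _ : Matrix Unit Unit R)]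
  rfl

theorem det_eq_det_mul_prod_of_add_vecMulVec {R : Type*} [CommRing R]
    {Λ : ℕ → Matrix n n R} {φ : ℕ → n → R} (hΛ : ∀ j, IsUnit (Λ j).det)
    (hstep : ∀ j, 1 ≤ j → Λ (j + 1) = Λ j + vecMulVec (φ j) (φ j)) (t : ℕ) :
    (Λ (t + 1)).det = (Λ 1).det * ∏ j ∈ Finset.Icc 1 t, (1 + φ j ⬝ᵥ (Λ j)⁻¹ *ᵥ φ j) := by
  induction t with
  | zero => simp
  | succ t ih =>
    rw [Finset.prod_Icc_succ_top (by omega), hstep (t + 1) (by omega),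
      det_add_vecMulVec (hΛ _), ih, mul_assoc]

theorem dotProduct_inv_mulVec_le_dotProduct {A : Matrix n n ℝ} (hA : (A - 1).PosSemidef)
    (v : n → ℝ) : v ⬝ᵥ A⁻¹ *ᵥ v ≤ v ⬝ᵥ v := by
  set y := A⁻¹ *ᵥ v
  have hAy : A *ᵥ y = v := by
    rw [mulVec_mulVec, mul_nonsing_inv _ (posDef_of_posSemidef_sub_one hA).det_pos.ne'.isUnit,
      one_mulVec]
  have hyy : y ⬝ᵥ y ≤ v ⬝ᵥ y := by
    have := hA.dotProduct_mulVec_nonneg y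
    rw [sub_mulVec, one_mulVec, hAy, star_trivial, dotProduct_sub, dotProduct_comm y v] at this
    linarith
  have hcs : (v ⬝ᵥ y) ^ 2 ≤ (v ⬝ᵥ v) * (y ⬝ᵥ y) := by
    simpa only [dotProduct, sq] using Finset.sum_mul_sq_le_sq_mul_sq Finset.univ v y
  have hy : 0 ≤ y ⬝ᵥ y := by simpa using dotProduct_self_star_nonneg y
  have hv : 0 ≤ v ⬝ᵥ v := by simpa using dotProduct_self_star_nonneg v
  -- `(v ⬝ᵥ y)² ≤ (v ⬝ᵥ v) (y ⬝ᵥ y) ≤ (v ⬝ᵥ v) (v ⬝ᵥ y)`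
  nlinarith

end Matrix

theorem Real.le_two_mul_log_one_add {x : ℝ} (h0 : 0 ≤ x) (h2 : x ≤ 2) :
    x ≤ 2 * Real.log (1 + x) := by
  have := Real.le_log_one_add_of_nonneg h0
  rw [div_le_iff₀ (by linarith)] at this
  nlinarith

theorem stmt_8_general (d : ℕ) (φ : ℕ → (Fin d → ℝ)) (hφ : ∀ t, φ t ⬝ᵥ φ t ≤ 1)
    (Λ₀ : Matrix (Fin d) (Fin d) ℝ)
    (hmin : (Λ₀ - 1).PosSemidef)
    (Λ : ℕ → Matrix (Fin d) (Fin d) ℝ)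
    (hΛ : ∀ t, Λ t = Λ₀ + ∑ j ∈ Finset.Icc 1 (t - 1), Matrix.vecMulVec (φ j) (φ j)) :
    ∀ t : ℕ,
      Real.log ((Λ (t + 1)).det / (Λ 1).det)
        ≤ ∑ j ∈ Finset.Icc 1 t, φ j ⬝ᵥ (Λ j)⁻¹ *ᵥ φ j ∧
      ∑ j ∈ Finset.Icc 1 t, φ j ⬝ᵥ (Λ j)⁻¹ *ᵥ φ j
        ≤ 2 * Real.log ((Λ (t + 1)).det / (Λ 1).det) := by
  have hsub : ∀ t, (Λ t - 1).PosSemidef := fun t => by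
    rw [hΛ t, add_sub_right_comm]
    exact hmin.add (posSemidef_sum _ fun j _ => posSemidef_vecMulVec_self (φ j))
  have hpos : ∀ t, (Λ t).PosDef := fun t => posDef_of_posSemidef_sub_one (hsub t)
  have hstep : ∀ j, 1 ≤ j → Λ (j + 1) = Λ j + vecMulVec (φ j) (φ j) := by
    rintro j hj
    obtain ⟨k, rfl⟩ := Nat.exists_eq_add_of_le' hj
    rw [hΛ, hΛ, Nat.add_sub_cancel, Nat.add_sub_cancel, Finset.sum_Icc_succ_top (by omega),
      add_assoc]
  have hx0 : ∀ j, 0 ≤ φ j ⬝ᵥ (Λ j)⁻¹ *ᵥ φ j := fun j => by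
    simpa using (hpos j).inv.posSemidef.dotProduct_mulVec_nonneg (φ j)
  have hx1 : ∀ j, φ j ⬝ᵥ (Λ j)⁻¹ *ᵥ φ j ≤ 1 := fun j =>
    (dotProduct_inv_mulVec_le_dotProduct (hsub j) (φ j)).trans (hφ j)
  intro t
  rw [det_eq_det_mul_prod_of_add_vecMulVec (fun j => (hpos j).det_pos.ne'.isUnit) hstep,
    mul_div_cancel_left₀ _ (hpos 1).det_pos.ne',
    Real.log_prod fun j _ => by linarith [hx0 j], Finset.mul_sum]
  refine ⟨Finset.sum_le_sum fun j _ => ?_, Finset.sum_le_sum fun j _ => ?_⟩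
  · linarith [Real.log_le_sub_one_of_pos (by linarith [hx0 j] : (0 : ℝ) < 1 + _)]
  · exact Real.le_two_mul_log_one_add (hx0 j) (by linarith [hx1 j])

/-- Elliptical potential lemma: log-determinant sandwich bounds for the sum of
self-normalized quadratic forms. -/
theorem stmt_8 (d : ℕ) (φ : ℕ → (Fin d → ℝ)) (hφ : ∀ t, φ t ⬝ᵥ φ t ≤ 1)
    (Λ₀ : Matrix (Fin d) (Fin d) ℝ) (hΛ₀ : Λ₀.PosDef)
    (hmin : (Λ₀ - 1).PosSemidef)
    (Λ : ℕ → Matrix (Fin d) (Fin d) ℝ)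
    (hΛ : ∀ t, Λ t = Λ₀ + ∑ j ∈ Finset.Icc 1 (t - 1), Matrix.vecMulVec (φ j) (φ j)) :
    ∀ t : ℕ,
      Real.log ((Λ (t + 1)).det / (Λ 1).det)
        ≤ ∑ j ∈ Finset.Icc 1 t, φ j ⬝ᵥ (Λ j)⁻¹ *ᵥ φ j ∧
      ∑ j ∈ Finset.Icc 1 t, φ j ⬝ᵥ (Λ j)⁻¹ *ᵥ φ j
        ≤ 2 * Real.log ((Λ (t + 1)).det / (Λ 1).det) :=
  stmt_8_general d φ hφ Λ₀ hmin Λ hΛ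
end
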